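/- arXiv:2203.09003 — 3 statements merged into one kernel-verified Lean document; each statement's English description precedes it below -/
import Mathlib

section
/- For odd n ≥ 3, let θ satisfy cos²θ = cos(π/n)/(1+cos(π/n)) and, for 1 ≤ l ≤ n, let φ_l = lπ(n−1)/n and |u_l⟩ = cosθ|0⟩ + sinθ sinφ_l |1⟩ + sinθ cosφ_l |2⟩ in ℂ³. Then ⟨u_l | u_{l+1}⟩ = 0 for every l (indices cyclic mod n). -/
open Real

noncomputable def kcbsVec (n : ℕ) (θ : ℝ) (l : ℕ) : EuclideanSpace ℂ (Fin 3) :=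
  WithLp.toLp 2 ![(Real.cos θ : ℂ),
    (Real.sin θ * Real.sin (l * Real.pi * (n - 1) / n) : ℂ),
    (Real.sin θ * Real.cos (l * Real.pi * (n - 1) / n) : ℂ)]

theorem kcbs_cyclic_orthogonality (n : ℕ) (hn : Odd n) (hn3 : 3 ≤ n) (θ : ℝ)
    (hθ : Real.cos θ ^ 2 = Real.cos (Real.pi / n) / (1 + Real.cos (Real.pi / n))) :
    ∀ l : ℕ, 1 ≤ l → l ≤ n →
      (inner ℂ (kcbsVec n θ l) (kcbsVec n θ (l + 1)) : ℂ) = 0 := by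
  intro l hl hln
  have hn0 : (0:ℝ) < (n:ℝ) := by positivity
  have hc : 0 < Real.cos (Real.pi / n) := by
    apply Real.cos_pos_of_mem_Ioo
    constructor
    · have : 0 < Real.pi / n := by positivity
      linarith [Real.pi_pos]
    · have : Real.pi / n ≤ Real.pi / 3 := by
        apply div_le_div_of_nonneg_left Real.pi_pos.le (by norm_num)
        exact_mod_cast hn3
      linarith [Real.pi_pos]
  have h1c : 1 + Real.cos (Real.pi / n) ≠ 0 := by linarith
  set a : ℝ := l * Real.pi * (n - 1) / n with ha
  set b : ℝ := (l + 1 : ℕ) * Real.pi * (n - 1) / n with hb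
  have hba : b - a = Real.pi - Real.pi / n := by
    rw [ha, hb]
    push_cast
    field_simp
    ring
  have hkey : Real.cos θ ^ 2 + Real.sin θ ^ 2 * (Real.cos a * Real.cos b + Real.sin a * Real.sin b) = 0 := by
    have : Real.cos a * Real.cos b + Real.sin a * Real.sin b = Real.cos (b - a) := by
      rw [Real.cos_sub]; ring
    rw [this, hba, Real.cos_pi_sub]
    have hs : Real.sin θ ^ 2 = 1 - Real.cos θ ^ 2 := by
      have := Real.sin_sq_add_cos_sq θ; linarith
    rw [hs, hθ]
    field_simp
    ring
  simp only [kcbsVec, PiLp.inner_apply, Fin.sum_univ_three, Matrix.cons_val_zero,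
    Matrix.cons_val_one, Matrix.head_cons, Matrix.cons_val_two, Matrix.tail_cons,
    RCLike.inner_apply, map_mul, Complex.conj_ofReal]
  simp only [← Complex.ofReal_mul, ← Complex.ofReal_add, Complex.ofReal_eq_zero]
  linear_combination hkey
end

section
/- Let Π_1,…,Π_n be pairwise commuting orthogonal projections on a Hilbert space with Π_i Π_{i+1} = 0 for all i (indices cyclic mod n, n odd), and let ρ be a density operator. Then ∑_{i=1}^n tr(Π_i ρ) ≤ (n−1)/2. -/
/-!
The projections generate a commutative algebra, in which the atoms
`E_S = ∏_{i ∈ S} Π_i ∏_{i ∉ S} (1 - Π_i)` are projections summing to `1`, with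
`∑ Π_i = ∑_S |S| E_S`. If `S` contains two cyclic neighbours then `E_S = 0`, and a subset of the
odd cycle `ℤ/n` containing no two neighbours has at most `(n - 1)/2` elements, since `S` and
`S + 1` are disjoint. As `tr (E_S ρ) ≥ 0` and `∑_S tr (E_S ρ) = 1`, the sum is a convex combination
of values `|S| ≤ (n - 1)/2`.
-/

open Matrix ComplexOrder

open Finset

section BooleanAtom

variable {R ι : Type*} [CommRing R] [Fintype ι] [DecidableEq ι]

def booleanAtom (q : ι → R) (S : Finset ι) : R :=
  (∏ i ∈ S, q i) * ∏ i ∈ Sᶜ, (1 - q i)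

theorem sum_booleanAtom (q : ι → R) : ∑ S, booleanAtom q S = 1 := by
  simpa [booleanAtom, compl_eq_univ_sdiff] using (prod_add q (fun i => 1 - q i) univ).symm

variable {q : ι → R} {i j : ι} {S : Finset ι}

theorem mul_booleanAtom_of_mem (hqi : IsIdempotentElem (q i)) (hi : i ∈ S) :
    q i * booleanAtom q S = booleanAtom q S := by
  rw [booleanAtom, ← mul_prod_erase S q hi, ← mul_assoc, ← mul_assoc, hqi.eq]

theorem mul_booleanAtom_of_notMem (hqi : IsIdempotentElem (q i)) (hi : i ∉ S) :
    q i * booleanAtom q S = 0 := by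
  rw [booleanAtom, ← mul_prod_erase Sᶜ _ (mem_compl.mpr hi), mul_left_comm, ← mul_assoc (q i),
    hqi.mul_one_sub_self, zero_mul, mul_zero]

theorem booleanAtom_eq_zero_of_mul_eq_zero (hqi : IsIdempotentElem (q i))
    (hqj : IsIdempotentElem (q j)) (hi : i ∈ S) (hj : j ∈ S) (hij : q i * q j = 0) :
    booleanAtom q S = 0 := by
  rw [← mul_booleanAtom_of_mem hqi hi, ← mul_booleanAtom_of_mem hqj hj, ← mul_assoc, hij, zero_mul]

theorem sum_eq_sum_card_smul_booleanAtom (hq : ∀ i, IsIdempotentElem (q i)) :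
    ∑ i, q i = ∑ S, #S • booleanAtom q S := by
  calc ∑ i, q i = ∑ S, ∑ i, q i * booleanAtom q S := by
        rw [sum_comm]; simp [← mul_sum, sum_booleanAtom]
    _ = ∑ S, ∑ i, if i ∈ S then booleanAtom q S else 0 := by
        refine sum_congr rfl fun S _ => sum_congr rfl fun i _ => ?_
        split_ifs with hi
        exacts [mul_booleanAtom_of_mem (hq i) hi, mul_booleanAtom_of_notMem (hq i) hi]
    _ = ∑ S, #S • booleanAtom q S := by simp

theorem isStarProjection_booleanAtom [StarRing R] (hq : ∀ i, IsStarProjection (q i))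
    (S : Finset ι) : IsStarProjection (booleanAtom q S) := by
  have hprod (T : Finset ι) (p : ι → R) (hp : ∀ i, IsStarProjection (p i)) :
      IsStarProjection (∏ i ∈ T, p i) :=
    prod_induction p _ (fun a b ha hb => ha.mul hb (Commute.all a b)) (.one R) fun i _ => hp i
  exact (hprod S q hq).mul (hprod Sᶜ _ fun i => (hq i).one_sub) (Commute.all _ _)

theorem sum_le_mul_map_one_of_isStarProjection [StarRing R] (hq : ∀ i, IsStarProjection (q i))
    (r : ι → ι → Prop) (horth : ∀ i j, r i j → q i * q j = 0) {k : ℝ}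
    (hk : ∀ S : Finset ι, (∀ i ∈ S, ∀ j ∈ S, ¬ r i j) → (#S : ℝ) ≤ k)
    (f : R →+ ℝ) (hf : ∀ p, IsStarProjection p → 0 ≤ f p) :
    ∑ i, f (q i) ≤ k * f 1 := by
  have hidem i := (hq i).isIdempotentElem
  calc ∑ i, f (q i) = ∑ S, (#S : ℝ) * f (booleanAtom q S) := by
        rw [← map_sum, sum_eq_sum_card_smul_booleanAtom hidem, map_sum]
        simp_rw [map_nsmul, nsmul_eq_mul]
    _ ≤ ∑ S, k * f (booleanAtom q S) := by
        refine sum_le_sum fun S _ => ?_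
        by_cases hS : ∀ i ∈ S, ∀ j ∈ S, ¬ r i j
        · exact mul_le_mul_of_nonneg_right (hk S hS) (hf _ (isStarProjection_booleanAtom hq S))
        · push Not at hS
          obtain ⟨i, hi, j, hj, hij⟩ := hS
          simp [booleanAtom_eq_zero_of_mul_eq_zero (hidem i) (hidem j) hi hj (horth i j hij)]
    _ = k * f 1 := by rw [← mul_sum, ← map_sum, sum_booleanAtom]

end BooleanAtom

theorem Fin.two_mul_card_lt_of_add_one_notMem {n : ℕ} [NeZero n] (hn : Odd n)
    {S : Finset (Fin n)} (hS : ∀ i ∈ S, i + 1 ∉ S) : 2 * #S < n := by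
  have hdisj : Disjoint S (S.map (Equiv.addRight 1).toEmbedding) :=
    disjoint_left.mpr fun j hj hj' => by
      obtain ⟨i, hi, rfl⟩ := mem_map.mp hj'
      exact hS i hi hj
  have hcard := (card_union_of_disjoint hdisj).symm.le.trans (card_le_univ _)
  simp only [card_map, Fintype.card_fin] at hcard
  obtain ⟨m, rfl⟩ := hn
  omega

theorem Matrix.trace_mul_nonneg_of_isStarProjection {m R : Type*} [Fintype m] [CommRing R]
    [PartialOrder R] [StarRing R] [StarOrderedRing R] {P ρ : Matrix m m R}
    (hP : IsStarProjection P) (hρ : ρ.PosSemidef) : 0 ≤ (P * ρ).trace := by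
  have h := (hρ.mul_mul_conjTranspose_same P).trace_nonneg
  rwa [← star_eq_conjTranspose, hP.isSelfAdjoint.star_eq, trace_mul_comm, ← Matrix.mul_assoc,
    hP.isIdempotentElem.eq] at h

theorem commuting_projections_cycle_classical_bound_general
    (n d : ℕ) [NeZero n] (hn : Odd n)
    (Pi : Fin n → Matrix (Fin d) (Fin d) ℂ)
    (hherm : ∀ i, (Pi i)ᴴ = Pi i)
    (hidem : ∀ i, Pi i * Pi i = Pi i)
    (hcomm : ∀ i j, Pi i * Pi j = Pi j * Pi i)
    (horth : ∀ i : Fin n, Pi i * Pi (i + 1) = 0)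
    (ρ : Matrix (Fin d) (Fin d) ℂ)
    (hρ : ρ.PosSemidef) (hρtr : ρ.trace = 1) :
    (∑ i, (Pi i * ρ).trace).re ≤ ((n : ℝ) - 1) / 2 := by
  let A := StarAlgebra.adjoin ℂ (Set.range Pi)
  have : IsMulCommutative A := StarAlgebra.isMulCommutative_adjoin ℂ
    (by rintro _ ⟨i, rfl⟩ _ ⟨j, rfl⟩; exact hcomm i j)
    (by rintro _ ⟨i, rfl⟩ _ ⟨j, rfl⟩; rw [star_eq_conjTranspose, hherm]; exact hcomm i j)
  let q (i : Fin n) : A := ⟨Pi i, StarAlgebra.subset_adjoin ℂ _ ⟨i, rfl⟩⟩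
  have hq (i : Fin n) : IsStarProjection (q i) := ⟨Subtype.ext (hidem i), Subtype.ext (hherm i)⟩
  let f : A →+ ℝ := AddMonoidHom.mk' (fun x => ((x : Matrix (Fin d) (Fin d) ℂ) * ρ).trace.re)
    fun x y => by simp [Matrix.add_mul]
  have hf (p : A) (hp : IsStarProjection p) : 0 ≤ f p :=
    (Complex.le_def.mp (trace_mul_nonneg_of_isStarProjection (hp.map A.subtype) hρ)).1
  have hk (S : Finset (Fin n)) (hS : ∀ i ∈ S, ∀ j ∈ S, ¬ j = i + 1) : (#S : ℝ) ≤ (n - 1) / 2 := by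
    have hcard : (2 * #S + 1 : ℝ) ≤ n := by
      exact_mod_cast Fin.two_mul_card_lt_of_add_one_notMem hn fun i hi hi1 => hS i hi _ hi1 rfl
    linarith
  open scoped IsMulCommutative in
  have hbound := sum_le_mul_map_one_of_isStarProjection hq (fun i j => j = i + 1)
    (by rintro i _ rfl; exact Subtype.ext (horth i)) hk f hf
  simpa [f, q, hρtr, Complex.re_sum] using hbound

theorem commuting_projections_cycle_classical_bound
    (n d : ℕ) [NeZero n] (hn : Odd n) (hn3 : 3 ≤ n)
    (Pi : Fin n → Matrix (Fin d) (Fin d) ℂ)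
    (hherm : ∀ i, (Pi i)ᴴ = Pi i)
    (hidem : ∀ i, Pi i * Pi i = Pi i)
    (hcomm : ∀ i j, Pi i * Pi j = Pi j * Pi i)
    (horth : ∀ i : Fin n, Pi i * Pi (i + 1) = 0)
    (ρ : Matrix (Fin d) (Fin d) ℂ)
    (hρ : ρ.PosSemidef) (hρtr : ρ.trace = 1) :
    (∑ i, (Pi i * ρ).trace).re ≤ ((n : ℝ) - 1) / 2 :=
  commuting_projections_cycle_classical_bound_general n d hn Pi hherm hidem hcomm horth ρ hρ hρtr
end

section
/- The qutrit swap circuit S'' = TUVU, built from T = I ⊗ ∑_k |−k⟩⟨k|, U = ∑_k P^k ⊗ |k⟩⟨k| and V = ∑_k |k⟩⟨k| ⊗ P^{−k} with P the cyclic translation operator on a qutrit, swaps the two qutrit registers: S''(|ψ⟩ ⊗ |φ⟩) = |φ⟩ ⊗ |ψ⟩ for all |ψ⟩, |φ⟩ in ℂ³. In particular S''(|ψ⟩ ⊗ |0⟩) = |0⟩ ⊗ |ψ⟩. -/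
open Matrix
open scoped Kronecker

/-- Tensor product of two vectors in ℂ³. -/
def tensVec (ψ φ : Fin 3 → ℂ) : Fin 3 × Fin 3 → ℂ := fun p => ψ p.1 * φ p.2

/-- The cyclic translation operator on a qutrit. -/
noncomputable def Ptrans : Matrix (Fin 3) (Fin 3) ℂ :=
  ∑ k : Fin 3, Matrix.single (k + 1) k (1 : ℂ)

lemma Pdef : Ptrans = !![0,0,1;1,0,0;0,1,0] := by
  simp only [Ptrans, Fin.sum_univ_three]
  ext i j
  fin_cases i <;> fin_cases j <;>
    simp (config := { decide := true }) [Matrix.single, vecHead, vecTail]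

lemma Q2 : (!![0,0,1;1,0,0;0,1,0] : Matrix (Fin 3) (Fin 3) ℂ) ^ 2
    = !![0,1,0;0,0,1;1,0,0] := by
  rw [pow_two]
  ext i j
  fin_cases i <;> fin_cases j <;>
    simp [Matrix.mul_apply, Fin.sum_univ_three, vecHead, vecTail]

lemma nv0 : ((-0 : Fin 3) : ℕ) = 0 := rfl
lemma nv1 : ((-1 : Fin 3) : ℕ) = 2 := rfl
lemma nv2 : ((-2 : Fin 3) : ℕ) = 1 := rfl

lemma hU (v : Fin 3 × Fin 3 → ℂ) :
    (∑ k : Fin 3, (Ptrans ^ (k : ℕ)) ⊗ₖ Matrix.single k k (1 : ℂ)) *ᵥ v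
      = fun p => v (p.1 - p.2, p.2) := by
  funext p
  obtain ⟨i, j⟩ := p
  fin_cases i <;> fin_cases j <;>
    simp (config := { decide := true }) [mulVec, dotProduct, Fintype.sum_prod_type,
      Fin.sum_univ_three, Matrix.sum_apply, kroneckerMap_apply, Matrix.single,
      show ((0:Fin 3):ℕ) = 0 from rfl, show ((1:Fin 3):ℕ) = 1 from rfl,
      show ((2:Fin 3):ℕ) = 2 from rfl, pow_zero, pow_one, Pdef, Q2,
      Matrix.one_apply, vecHead, vecTail] <;> rfl

lemma hV (v : Fin 3 × Fin 3 → ℂ) :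
    (∑ k : Fin 3, Matrix.single k k (1 : ℂ) ⊗ₖ (Ptrans ^ ((-k : Fin 3) : ℕ))) *ᵥ v
      = fun p => v (p.1, p.2 + p.1) := by
  funext p
  obtain ⟨i, j⟩ := p
  fin_cases i <;> fin_cases j <;>
    simp (config := { decide := true }) [mulVec, dotProduct, Fintype.sum_prod_type,
      Fin.sum_univ_three, Matrix.sum_apply, kroneckerMap_apply, Matrix.single,
      nv0, nv1, nv2, pow_zero, pow_one, Pdef, Q2,
      Matrix.one_apply, vecHead, vecTail] <;> rfl

lemma hT (v : Fin 3 × Fin 3 → ℂ) :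
    ((1 : Matrix (Fin 3) (Fin 3) ℂ) ⊗ₖ
        (∑ k : Fin 3, Matrix.single (-k) k (1 : ℂ))) *ᵥ v
      = fun p => v (p.1, -p.2) := by
  funext p
  obtain ⟨i, j⟩ := p
  fin_cases i <;> fin_cases j <;>
    simp (config := { decide := true }) [mulVec, dotProduct, Fintype.sum_prod_type,
      Fin.sum_univ_three, Matrix.sum_apply, kroneckerMap_apply, Matrix.single,
      Matrix.one_apply] <;> rfl

theorem qutrit_swap_circuit (ψ φ : Fin 3 → ℂ) :
    (((1 : Matrix (Fin 3) (Fin 3) ℂ) ⊗ₖ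
        (∑ k : Fin 3, Matrix.single (-k) k (1 : ℂ))) *
      (∑ k : Fin 3, (Ptrans ^ (k : ℕ)) ⊗ₖ Matrix.single k k (1 : ℂ)) *
      (∑ k : Fin 3, Matrix.single k k (1 : ℂ) ⊗ₖ (Ptrans ^ ((-k : Fin 3) : ℕ))) *
      (∑ k : Fin 3, (Ptrans ^ (k : ℕ)) ⊗ₖ Matrix.single k k (1 : ℂ))) *ᵥ
        tensVec ψ φ = tensVec φ ψ := by
  rw [← Matrix.mulVec_mulVec, ← Matrix.mulVec_mulVec, ← Matrix.mulVec_mulVec,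
    hU, hV, hU, hT]
  funext p
  obtain ⟨i, j⟩ := p
  fin_cases i <;> fin_cases j <;>
    simp [tensVec, show ((-1:Fin 3)) = 2 from rfl, show ((-2:Fin 3)) = 1 from rfl,
      mul_comm] <;> ring
end
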